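/- Let ρ > 0 and v ∈ ℝ, write a point of ℝ⁴ as (t, x, y, z) and s = t² + x² + y² + z² + ρ², and let A₀, A₁, A₂, A₃ : ℝ⁴ → M₂(ℂ) be the one-instanton configuration A₀ = (1/s)·[[−z, −x+iy],[−x−iy, z]], A₁ = (1/s)·[[y, t+iz],[t−iz, −y]], A₂ = (1/s)·[[−x, −it+z],[it+z, x]], A₃ = (1/s)·[[t, −ix−y],[ix−y, −t]]. Define H : ℝ⁴ → M₂(ℂ) by H = (v/s)·[[(t+iz)² − (x−iy)², 2i(tx − yz)],[2i(tx − yz), (t−iz)² − (x+iy)²]] and the covariant derivative D_μ H = ∂_μ H − i A_μ H − i H A_μᵀ. Then ∑_{μ=0}^{3} D_μ (D_μ H) = 0 identically on ℝ⁴, where D_μ acts on each D_ν H by the same formula D_μ K = ∂_μ K − i A_μ K − i K A_μᵀ. -/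

import Mathlib

open Matrix

/-- The partial derivative `∂_μ` of a matrix-valued function on `ℝ⁴`, taken entrywise. -/
noncomputable def pderiv {m : Type*} (μ : Fin 4)
    (A : (Fin 4 → ℝ) → Matrix m m ℂ) (p : Fin 4 → ℝ) : Matrix m m ℂ :=
  Matrix.of fun i j => fderiv ℝ (fun q => A q i j) p (Pi.single μ 1)

/-- The covariant derivative `D_μ K = ∂_μ K − i A_μ K − i K A_μᵀ` of a field `K` in the
rank-two symmetric tensor representation. -/
noncomputable def Dcov {m : Type*} [Fintype m]
    (A : Fin 4 → (Fin 4 → ℝ) → Matrix m m ℂ) (μ : Fin 4)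
    (K : (Fin 4 → ℝ) → Matrix m m ℂ) : (Fin 4 → ℝ) → Matrix m m ℂ :=
  fun p => pderiv μ K p - Complex.I • (A μ p * K p) - Complex.I • (K p * (A μ p)ᵀ)

/-- `s = t² + x² + y² + z² + ρ²` for `(t,x,y,z) ∈ ℝ⁴`. -/
def sdenom (ρ : ℝ) (p : Fin 4 → ℝ) : ℝ :=
  p 0 ^ 2 + p 1 ^ 2 + p 2 ^ 2 + p 3 ^ 2 + ρ ^ 2

/-- The BPST one-instanton configuration of size `ρ`, with `(t,x,y,z) = (p 0, p 1, p 2, p 3)`. -/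
noncomputable def bpst (ρ : ℝ) : Fin 4 → (Fin 4 → ℝ) → Matrix (Fin 2) (Fin 2) ℂ :=
  ![fun p => ((sdenom ρ p : ℂ))⁻¹ •
      !![-(p 3 : ℂ), -(p 1 : ℂ) + (p 2 : ℂ) * Complex.I;
         -(p 1 : ℂ) - (p 2 : ℂ) * Complex.I, (p 3 : ℂ)],
    fun p => ((sdenom ρ p : ℂ))⁻¹ •
      !![(p 2 : ℂ), (p 0 : ℂ) + (p 3 : ℂ) * Complex.I;
         (p 0 : ℂ) - (p 3 : ℂ) * Complex.I, -(p 2 : ℂ)],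
    fun p => ((sdenom ρ p : ℂ))⁻¹ •
      !![-(p 1 : ℂ), -(p 0 : ℂ) * Complex.I + (p 3 : ℂ);
         (p 0 : ℂ) * Complex.I + (p 3 : ℂ), (p 1 : ℂ)],
    fun p => ((sdenom ρ p : ℂ))⁻¹ •
      !![(p 0 : ℂ), -(p 1 : ℂ) * Complex.I - (p 2 : ℂ);
         (p 1 : ℂ) * Complex.I - (p 2 : ℂ), -(p 0 : ℂ)]]

/-- The Higgs field configuration in the rank-two symmetric tensor representation of `SU(2)`
under the BPST one-instanton background, with `(t,x,y,z) = (p 0, p 1, p 2, p 3)`. -/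
noncomputable def higgs (ρ v : ℝ) (p : Fin 4 → ℝ) : Matrix (Fin 2) (Fin 2) ℂ :=
  ((v : ℂ) / (sdenom ρ p : ℂ)) •
    !![((p 0 : ℂ) + (p 3 : ℂ) * Complex.I) ^ 2 - ((p 1 : ℂ) - (p 2 : ℂ) * Complex.I) ^ 2,
       2 * Complex.I * ((p 0 : ℂ) * (p 1 : ℂ) - (p 2 : ℂ) * (p 3 : ℂ));
       2 * Complex.I * ((p 0 : ℂ) * (p 1 : ℂ) - (p 2 : ℂ) * (p 3 : ℂ)),
       ((p 0 : ℂ) - (p 3 : ℂ) * Complex.I) ^ 2 - ((p 1 : ℂ) + (p 2 : ℂ) * Complex.I) ^ 2]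

/-!
Write `g = t + i (x σ₁ + y σ₂ + z σ₃)` for the quaternion of the point, `e_μ = ∂_μ g` for the
quaternion units and `ψ ⊙ χ = ψ χᵀ + χ ψᵀ` for the symmetric product, so that
`H = (v / 2s) g ⊙ g`. The covariant derivative obeys the Leibniz rule on `⊙`, with
`D_μ ψ = ∂_μ ψ - i A_μ ψ` on each factor, and the instanton satisfies
`D_μ g = (ρ² / s) e_μ + (x_μ / s) g`. Hence `D_μ H = (v ρ² / s²) g ⊙ e_μ`. Differentiating once
more and summing over `μ`, the identities `∑ e_μ ⊙ e_μ = 0`, `∑ x_μ e_μ = g` and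
`∑ A_μ e_μ = (3 i / s) g` reduce `∑ D_μ D_μ H` to `(v ρ² / s³) (-4 + 1 + 3) g ⊙ g = 0`.
-/

section MatrixCalculus

variable {m : Type*} {μ : Fin 4} {p : Fin 4 → ℝ}

def EntrywiseDifferentiableAt (K : (Fin 4 → ℝ) → Matrix m m ℂ) (p : Fin 4 → ℝ) : Prop :=
  ∀ i j, DifferentiableAt ℝ (fun q => K q i j) p

lemma entrywiseDifferentiableAt_const (M : Matrix m m ℂ) :
    EntrywiseDifferentiableAt (fun _ => M) p := fun _ _ => differentiableAt_const _

lemma EntrywiseDifferentiableAt.add {K L : (Fin 4 → ℝ) → Matrix m m ℂ}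
    (hK : EntrywiseDifferentiableAt K p) (hL : EntrywiseDifferentiableAt L p) :
    EntrywiseDifferentiableAt (fun q => K q + L q) p := fun i j => (hK i j).add (hL i j)

lemma EntrywiseDifferentiableAt.transpose {K : (Fin 4 → ℝ) → Matrix m m ℂ}
    (hK : EntrywiseDifferentiableAt K p) : EntrywiseDifferentiableAt (fun q => (K q)ᵀ) p :=
  fun i j => hK j i

lemma EntrywiseDifferentiableAt.mul [Fintype m] {K L : (Fin 4 → ℝ) → Matrix m m ℂ}
    (hK : EntrywiseDifferentiableAt K p) (hL : EntrywiseDifferentiableAt L p) :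
    EntrywiseDifferentiableAt (fun q => K q * L q) p := fun i j => by
  simp only [Matrix.mul_apply]
  exact DifferentiableAt.fun_sum fun k _ => (hK i k).mul (hL k j)

lemma pderiv_const (M : Matrix m m ℂ) : pderiv μ (fun _ => M) p = 0 := by
  ext i j
  simp [pderiv]

lemma pderiv_add {K L : (Fin 4 → ℝ) → Matrix m m ℂ}
    (hK : EntrywiseDifferentiableAt K p) (hL : EntrywiseDifferentiableAt L p) :
    pderiv μ (fun q => K q + L q) p = pderiv μ K p + pderiv μ L p := by
  ext i j
  simp only [pderiv, Matrix.of_apply, Matrix.add_apply]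
  rw [fderiv_fun_add (hK i j) (hL i j), _root_.add_apply]

lemma pderiv_smul {φ : (Fin 4 → ℝ) → ℝ} {K : (Fin 4 → ℝ) → Matrix m m ℂ}
    (hφ : DifferentiableAt ℝ φ p) (hK : EntrywiseDifferentiableAt K p) :
    pderiv μ (fun q => φ q • K q) p =
      fderiv ℝ φ p (Pi.single μ 1) • K p + φ p • pderiv μ K p := by
  ext i j
  simp only [pderiv, Matrix.of_apply, Matrix.smul_apply, Matrix.add_apply]
  rw [fderiv_fun_smul hφ (hK i j)]
  simp only [_root_.add_apply, _root_.smul_apply, ContinuousLinearMap.smulRight_apply]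
  abel

lemma pderiv_transpose (K : (Fin 4 → ℝ) → Matrix m m ℂ) :
    pderiv μ (fun q => (K q)ᵀ) p = (pderiv μ K p)ᵀ := rfl

lemma pderiv_mul [Fintype m] {K L : (Fin 4 → ℝ) → Matrix m m ℂ}
    (hK : EntrywiseDifferentiableAt K p) (hL : EntrywiseDifferentiableAt L p) :
    pderiv μ (fun q => K q * L q) p = pderiv μ K p * L p + K p * pderiv μ L p := by
  ext i j
  simp only [pderiv, Matrix.of_apply, Matrix.mul_apply, Matrix.add_apply]
  rw [fderiv_fun_sum (A := fun k q => K q i k * L q k j) fun k _ => (hK i k).mul (hL k j),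
    _root_.sum_apply, ← Finset.sum_add_distrib]
  refine Finset.sum_congr rfl fun k _ => ?_
  rw [fderiv_fun_mul (hK i k) (hL k j)]
  simp only [_root_.add_apply, _root_.smul_apply, smul_eq_mul]
  ring

lemma hasFDerivAt_sum_smul_apply (M : Fin 4 → Matrix m m ℂ) (i j : m) :
    HasFDerivAt (fun q : Fin 4 → ℝ => (∑ ν, q ν • M ν) i j)
      (∑ ν, (ContinuousLinearMap.proj ν : (Fin 4 → ℝ) →L[ℝ] ℝ).smulRight (M ν i j)) p := by
  simp only [Matrix.sum_apply, Matrix.smul_apply]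
  exact HasFDerivAt.fun_sum fun ν _ =>
    (ContinuousLinearMap.proj ν : (Fin 4 → ℝ) →L[ℝ] ℝ).hasFDerivAt.smul_const (M ν i j)

lemma entrywiseDifferentiableAt_sum_smul (M : Fin 4 → Matrix m m ℂ) :
    EntrywiseDifferentiableAt (fun q => ∑ ν, q ν • M ν) p := fun i j =>
  (hasFDerivAt_sum_smul_apply M i j).differentiableAt

lemma pderiv_sum_smul (M : Fin 4 → Matrix m m ℂ) :
    pderiv μ (fun q => ∑ ν, q ν • M ν) p = M μ := by
  ext i j
  simp [pderiv, (hasFDerivAt_sum_smul_apply M i j).fderiv, Pi.single_apply]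

end MatrixCalculus

section CovariantDerivative

variable {m : Type*} [Fintype m] (A : Fin 4 → (Fin 4 → ℝ) → Matrix m m ℂ) {μ : Fin 4}
  {p : Fin 4 → ℝ}

/-- `ψ ⊙ χ`, the rank-two symmetric tensor built from two fundamental fields. -/
def symmProd : Matrix m m ℂ →ₗ[ℂ] Matrix m m ℂ →ₗ[ℂ] Matrix m m ℂ :=
  LinearMap.mk₂ ℂ (fun ψ χ => ψ * χᵀ + χ * ψᵀ)
    (fun _ _ _ => by simp only [Matrix.add_mul, Matrix.transpose_add, Matrix.mul_add]; abel)
    (fun _ _ _ => by simp only [Matrix.smul_mul, Matrix.transpose_smul, Matrix.mul_smul, smul_add])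
    (fun _ _ _ => by simp only [Matrix.add_mul, Matrix.transpose_add, Matrix.mul_add]; abel)
    (fun _ _ _ => by simp only [Matrix.smul_mul, Matrix.transpose_smul, Matrix.mul_smul, smul_add])

lemma symmProd_apply (ψ χ : Matrix m m ℂ) : symmProd ψ χ = ψ * χᵀ + χ * ψᵀ := rfl

lemma symmProd_comm (ψ χ : Matrix m m ℂ) : symmProd ψ χ = symmProd χ ψ :=
  add_comm _ _

lemma EntrywiseDifferentiableAt.symmProd {ψ χ : (Fin 4 → ℝ) → Matrix m m ℂ}
    (hψ : EntrywiseDifferentiableAt ψ p) (hχ : EntrywiseDifferentiableAt χ p) :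
    EntrywiseDifferentiableAt (fun q => symmProd (ψ q) (χ q)) p :=
  (hψ.mul hχ.transpose).add (hχ.mul hψ.transpose)

/-- The covariant derivative in the fundamental representation. -/
noncomputable def DcovFund (μ : Fin 4) (ψ : (Fin 4 → ℝ) → Matrix m m ℂ) (p : Fin 4 → ℝ) :
    Matrix m m ℂ :=
  pderiv μ ψ p - Complex.I • (A μ p * ψ p)

lemma DcovFund_const (M : Matrix m m ℂ) :
    DcovFund A μ (fun _ => M) p = -Complex.I • (A μ p * M) := by
  simp [DcovFund, pderiv_const]

lemma Dcov_smul {φ : (Fin 4 → ℝ) → ℝ} {K : (Fin 4 → ℝ) → Matrix m m ℂ}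
    (hφ : DifferentiableAt ℝ φ p) (hK : EntrywiseDifferentiableAt K p) :
    Dcov A μ (fun q => φ q • K q) p =
      fderiv ℝ φ p (Pi.single μ 1) • K p + φ p • Dcov A μ K p := by
  simp only [Dcov, pderiv_smul hφ hK, Matrix.mul_smul, Matrix.smul_mul, smul_sub,
    smul_comm Complex.I (φ p)]
  abel

lemma Dcov_symmProd {ψ χ : (Fin 4 → ℝ) → Matrix m m ℂ}
    (hψ : EntrywiseDifferentiableAt ψ p) (hχ : EntrywiseDifferentiableAt χ p) :
    Dcov A μ (fun q => symmProd (ψ q) (χ q)) p =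
      symmProd (DcovFund A μ ψ p) (χ p) + symmProd (ψ p) (DcovFund A μ χ p) := by
  simp only [symmProd_apply, Dcov, DcovFund,
    pderiv_add (hψ.mul hχ.transpose) (hχ.mul hψ.transpose), pderiv_mul hψ hχ.transpose,
    pderiv_mul hχ hψ.transpose, pderiv_transpose, Matrix.transpose_sub, Matrix.transpose_smul,
    Matrix.transpose_mul, Matrix.sub_mul, Matrix.mul_sub, Matrix.smul_mul, Matrix.mul_smul,
    Matrix.mul_add, Matrix.add_mul, Matrix.mul_assoc, smul_add]
  abel

end CovariantDerivative

section Profile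

variable {ρ : ℝ}

lemma sdenom_pos (hρ : ρ ≠ 0) (p : Fin 4 → ℝ) : 0 < sdenom ρ p := by
  unfold sdenom
  positivity

lemma ofReal_sdenom (ρ : ℝ) (p : Fin 4 → ℝ) :
    (sdenom ρ p : ℂ) = (p 0 : ℂ) ^ 2 + (p 1 : ℂ) ^ 2 + (p 2 : ℂ) ^ 2 + (p 3 : ℂ) ^ 2 + (ρ : ℂ) ^ 2 := by
  simp [sdenom]

lemma hasFDerivAt_sdenom (ρ : ℝ) (p : Fin 4 → ℝ) :
    HasFDerivAt (sdenom ρ)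
      (∑ ν, (2 * p ν) • (ContinuousLinearMap.proj ν : (Fin 4 → ℝ) →L[ℝ] ℝ)) p := by
  have hsq : ∀ ν : Fin 4, HasFDerivAt (fun q : Fin 4 → ℝ => q ν ^ 2)
      ((2 * p ν) • (ContinuousLinearMap.proj ν : (Fin 4 → ℝ) →L[ℝ] ℝ)) p := fun ν => by
    simpa [two_mul] using
      ((ContinuousLinearMap.proj ν : (Fin 4 → ℝ) →L[ℝ] ℝ).hasFDerivAt (x := p)).pow 2
  unfold sdenom
  simpa [Fin.sum_univ_four, add_assoc] using
    ((((hsq 0).add (hsq 1)).add (hsq 2)).add (hsq 3)).add_const (ρ ^ 2)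

lemma hasFDerivAt_const_div_sdenom_pow (hρ : ρ ≠ 0) (c : ℝ) (k : ℕ) (p : Fin 4 → ℝ) :
    HasFDerivAt (fun q => c / sdenom ρ q ^ k)
      ((-(k * c) / sdenom ρ p ^ (k + 1)) •
        ∑ ν, (2 * p ν) • (ContinuousLinearMap.proj ν : (Fin 4 → ℝ) →L[ℝ] ℝ)) p := by
  have hs := (sdenom_pos hρ p).ne'
  have h : HasDerivAt (fun z : ℝ => c / z ^ k) (-(k * c) / sdenom ρ p ^ (k + 1))
      (sdenom ρ p) := by
    refine ((hasDerivAt_const _ c).fun_div (hasDerivAt_pow k _)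
      (pow_ne_zero k hs)).congr_deriv ?_
    rcases k with _ | k
    · simp
    · field_simp
      push_cast
      ring
  exact h.comp_hasFDerivAt p (hasFDerivAt_sdenom ρ p)

lemma fderiv_const_div_sdenom_pow (hρ : ρ ≠ 0) (c : ℝ) (k : ℕ) (μ : Fin 4) (p : Fin 4 → ℝ) :
    fderiv ℝ (fun q => c / sdenom ρ q ^ k) p (Pi.single μ 1) =
      -(2 * k * c * p μ) / sdenom ρ p ^ (k + 1) := by
  rw [(hasFDerivAt_const_div_sdenom_pow hρ c k p).fderiv]
  simp [Pi.single_apply]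
  ring

end Profile

/-- The quaternion units `1, iσ₁, iσ₂, iσ₃`. -/
def quatBasis : Fin 4 → Matrix (Fin 2) (Fin 2) ℂ :=
  ![1, !![0, Complex.I; Complex.I, 0], !![0, 1; -1, 0], !![Complex.I, 0; 0, -Complex.I]]

noncomputable def quat (p : Fin 4 → ℝ) : Matrix (Fin 2) (Fin 2) ℂ := ∑ ν, p ν • quatBasis ν

lemma quat_eq (p : Fin 4 → ℝ) :
    quat p = !![(p 0 : ℂ) + p 3 * Complex.I, p 1 * Complex.I + p 2;
                p 1 * Complex.I - p 2, (p 0 : ℂ) - p 3 * Complex.I] := by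
  ext i j
  fin_cases i <;> fin_cases j <;>
    simp [quat, quatBasis, Fin.sum_univ_four, Complex.real_smul] <;> ring

lemma entrywiseDifferentiableAt_quat (p : Fin 4 → ℝ) : EntrywiseDifferentiableAt quat p :=
  entrywiseDifferentiableAt_sum_smul quatBasis

lemma pderiv_quat (μ : Fin 4) (p : Fin 4 → ℝ) : pderiv μ quat p = quatBasis μ :=
  pderiv_sum_smul quatBasis

lemma higgs_eq (ρ v : ℝ) :
    higgs ρ v = fun q => (v / 2 / sdenom ρ q ^ 1) • symmProd (quat q) (quat q) := by
  funext q
  ext i j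
  fin_cases i <;> fin_cases j <;>
    simp [higgs, quat_eq, symmProd_apply, Matrix.vecMul, dotProduct, Fin.sum_univ_two,
      Complex.real_smul, div_eq_mul_inv] <;>
    ring_nf <;> simp [Complex.I_sq] <;> ring

lemma DcovFund_bpst_quat {ρ : ℝ} (hρ : ρ ≠ 0) (μ : Fin 4) (p : Fin 4 → ℝ) :
    DcovFund (bpst ρ) μ quat p =
      (ρ ^ 2 / sdenom ρ p) • quatBasis μ + (p μ / sdenom ρ p) • quat p := by
  have hs : (sdenom ρ p : ℂ) ≠ 0 := by exact_mod_cast (sdenom_pos hρ p).ne'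
  rw [ofReal_sdenom] at hs
  rw [DcovFund, pderiv_quat]
  fin_cases μ <;> ext i j <;> fin_cases i <;> fin_cases j <;>
    simp [bpst, quat_eq, quatBasis, Complex.real_smul, ofReal_sdenom] <;>
    field_simp <;> ring_nf <;> simp only [Complex.I_sq, Complex.I_pow_three] <;> ring

lemma sum_symmProd_quatBasis_self : ∑ μ, symmProd (quatBasis μ) (quatBasis μ) = 0 := by
  ext i j
  fin_cases i <;> fin_cases j <;>
    simp [Fin.sum_univ_four, symmProd_apply, quatBasis, Matrix.vecMul, dotProduct,
      Fin.sum_univ_two]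

lemma sum_bpst_mul_quatBasis (ρ : ℝ) (p : Fin 4 → ℝ) :
    ∑ μ, bpst ρ μ p * quatBasis μ = (3 / sdenom ρ p) • (Complex.I • quat p) := by
  ext i j
  fin_cases i <;> fin_cases j <;>
    simp [Fin.sum_univ_four, bpst, quat_eq, quatBasis, Complex.real_smul] <;>
    ring_nf <;> simp [Complex.I_sq] <;> ring

lemma Dcov_bpst_higgs {ρ : ℝ} (hρ : ρ ≠ 0) (v : ℝ) (μ : Fin 4) :
    Dcov (bpst ρ) μ (higgs ρ v) =
      fun q => (v * ρ ^ 2 / sdenom ρ q ^ 2) • symmProd (quat q) (quatBasis μ) := by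
  funext p
  have hq := entrywiseDifferentiableAt_quat p
  have hs := (sdenom_pos hρ p).ne'
  rw [higgs_eq, Dcov_smul _ (hasFDerivAt_const_div_sdenom_pow hρ _ 1 p).differentiableAt
    (hq.symmProd hq), Dcov_symmProd _ hq hq, fderiv_const_div_sdenom_pow hρ,
    DcovFund_bpst_quat hρ]
  simp only [map_add, LinearMap.add_apply, LinearMap.map_smul_of_tower, LinearMap.smul_apply,
    symmProd_comm (quatBasis μ)]
  match_scalars <;> field_simp <;> ring

lemma Dcov_bpst_Dcov_bpst_higgs {ρ : ℝ} (hρ : ρ ≠ 0) (v : ℝ) (μ : Fin 4) (p : Fin 4 → ℝ) :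
    Dcov (bpst ρ) μ (Dcov (bpst ρ) μ (higgs ρ v)) p =
      (-(3 * v * ρ ^ 2) / sdenom ρ p ^ 3) • symmProd (quat p) (p μ • quatBasis μ) +
      (v * ρ ^ 4 / sdenom ρ p ^ 3) • symmProd (quatBasis μ) (quatBasis μ) +
      (v * ρ ^ 2 / sdenom ρ p ^ 2) •
        symmProd (quat p) (-Complex.I • (bpst ρ μ p * quatBasis μ)) := by
  have hq := entrywiseDifferentiableAt_quat p
  have hE := entrywiseDifferentiableAt_const (p := p) (quatBasis μ)
  have hs := (sdenom_pos hρ p).ne'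
  rw [Dcov_bpst_higgs hρ, Dcov_smul _ (hasFDerivAt_const_div_sdenom_pow hρ _ 2 p).differentiableAt
    (hq.symmProd hE), Dcov_symmProd _ hq hE, fderiv_const_div_sdenom_pow hρ,
    DcovFund_bpst_quat hρ, DcovFund_const]
  simp only [map_add, LinearMap.add_apply, LinearMap.map_smul_of_tower, LinearMap.smul_apply]
  match_scalars <;> field_simp
  ring

/-- **Instantons in Partially Broken Gauge Groups**, Appendix B: under the BPST one-instanton
background of size `ρ > 0`, the Higgs field configuration `H` in the rank-two symmetric tensor
representation satisfies the covariant Laplace equation `∑_μ D_μ D_μ H = 0` on `ℝ⁴`. -/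
theorem higgs_covariant_laplacian_eq_zero (ρ v : ℝ) (hρ : 0 < ρ) :
    ∀ p : Fin 4 → ℝ, ∑ μ : Fin 4, Dcov (bpst ρ) μ (Dcov (bpst ρ) μ (higgs ρ v)) p = 0 := by
  intro p
  simp only [Dcov_bpst_Dcov_bpst_higgs hρ.ne', Finset.sum_add_distrib, ← Finset.smul_sum,
    ← map_sum, sum_symmProd_quatBasis_self, sum_bpst_mul_quatBasis]
  rw [← quat]
  simp only [map_smul, LinearMap.map_smul_of_tower, smul_zero, add_zero]
  match_scalars
  ring_nf
  rw [Complex.I_sq]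
  ring
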